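/- arXiv:1909.07531 — 2 statements merged into one kernel-verified Lean document; each statement's English description precedes it below -/
import Mathlib

section
/- Let θ₁, α ∈ ℝ, Δx > 0, and suppose Ψ_±: (Δx·ℤ) × ℝ → ℂ² satisfy i∂_t Ψ_±(x,t) = ±(θ₁/4)(e^{-iα}Ψ_±(x+Δx,t) + e^{iα}Ψ_±(x-Δx,t)). Then Ψ'_±(x,t) := e^{i(±θ₁t/2 - αx/Δx)}Ψ_±(x,t) satisfy the CTQW equation i∂_t Ψ'_±(x,t) = ±(θ₁/4)[Ψ'_±(x+Δx,t) + Ψ'_±(x-Δx,t) - 2Ψ'_±(x,t)]. -/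
open Matrix Complex MeasureTheory

noncomputable section

def σx : Matrix (Fin 2) (Fin 2) ℂ := !![0, 1; 1, 0]
def σy : Matrix (Fin 2) (Fin 2) ℂ := !![0, -Complex.I; Complex.I, 0]
def σz : Matrix (Fin 2) (Fin 2) ℂ := !![1, 0; 0, -1]

/-- `Rz ψ = exp(-iψσz/2) = diag(e^{-iψ/2}, e^{iψ/2})`. -/
def Rz (ψ : ℝ) : Matrix (Fin 2) (Fin 2) ℂ :=
  !![Complex.exp (-(Complex.I * ψ) / 2), 0; 0, Complex.exp (Complex.I * ψ / 2)]

/-- `Ry θ = exp(-iθσy/2)`. -/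
def Ry (θ : ℝ) : Matrix (Fin 2) (Fin 2) ℂ :=
  !![(Real.cos (θ / 2) : ℂ), -(Real.sin (θ / 2) : ℂ);
     (Real.sin (θ / 2) : ℂ), (Real.cos (θ / 2) : ℂ)]

/-- `n̂·σ = nx σx + ny σy + nz σz`. -/
def nσ (nx ny nz : ℝ) : Matrix (Fin 2) (Fin 2) ℂ :=
  (nx : ℂ) • σx + (ny : ℂ) • σy + (nz : ℂ) • σz

/-- `expnσ n̂ t = exp(-i t n̂·σ) = cos t · I - i sin t · n̂·σ`. -/
def expnσ (nx ny nz : ℝ) (t : ℝ) : Matrix (Fin 2) (Fin 2) ℂ :=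
  (Real.cos t : ℂ) • (1 : Matrix (Fin 2) (Fin 2) ℂ)
    - (Complex.I * (Real.sin t : ℂ)) • nσ nx ny nz

/-- `Ez α = exp(iασz) = diag(e^{iα}, e^{-iα})`. -/
def Ez (α : ℝ) : Matrix (Fin 2) (Fin 2) ℂ :=
  !![Complex.exp (Complex.I * α), 0; 0, Complex.exp (-(Complex.I * α))]

/-- Bessel function of the first kind of integer order,
via the standard integral representation. -/
def besselJ (n : ℤ) (t : ℝ) : ℝ :=
  (1 / Real.pi) * ∫ θ in (0:ℝ)..Real.pi, Real.cos (n * θ - t * Real.sin θ)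

theorem stmt11 (θ₁ α Δx : ℝ) (hΔx : 0 < Δx) (ε : ℝ) (hε : ε = 1 ∨ ε = -1)
    (Ψ : ℤ → ℝ → (Fin 2 → ℂ)) (dΨ : ℤ → ℝ → (Fin 2 → ℂ))
    (hderiv : ∀ (n : ℤ) (t : ℝ), HasDerivAt (Ψ n) (dΨ n t) t)
    (hevol : ∀ (n : ℤ) (t : ℝ),
      Complex.I • dΨ n t = ((ε : ℂ) * θ₁ / 4) •
        (Complex.exp (-(Complex.I * α)) • Ψ (n + 1) t +
         Complex.exp (Complex.I * α) • Ψ (n - 1) t)) :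
    ∀ (n : ℤ) (t : ℝ), ∃ D : Fin 2 → ℂ,
      HasDerivAt (fun s : ℝ => Complex.exp (Complex.I * ((ε * θ₁ * s / 2 - α * n : ℝ) : ℂ)) • Ψ n s) D t ∧
      Complex.I • D = ((ε : ℂ) * θ₁ / 4) •
        (Complex.exp (Complex.I * (ε * θ₁ * t / 2 - α * (n + 1))) • Ψ (n + 1) t +
         Complex.exp (Complex.I * (ε * θ₁ * t / 2 - α * (n - 1))) • Ψ (n - 1) t -
         (2 : ℂ) • Complex.exp (Complex.I * (ε * θ₁ * t / 2 - α * n)) • Ψ n t) := by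
  intro n t
  set a : ℂ := Complex.I * (ε * θ₁ / 2) with ha
  set g : ℝ → ℂ := fun s => Complex.exp (a * s - Complex.I * (α * n)) with hgdef
  have hg : ∀ s : ℝ, Complex.exp (Complex.I * ((ε * θ₁ * s / 2 - α * n : ℝ) : ℂ)) = g s := by
    intro s
    simp only [hgdef, ha]
    congr 1
    push_cast
    ring
  have hgd : HasDerivAt g (a * g t) t := by
    have h1 : HasDerivAt (fun s : ℝ => a * s - Complex.I * (α * n)) a t := by
      simpa using (((hasDerivAt_id ((t : ℝ) : ℂ)).const_mul a).sub_const
        (Complex.I * (α * n))).comp_ofReal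
    simpa [hgdef, mul_comm] using h1.cexp
  have hD : HasDerivAt (fun s : ℝ => g s • Ψ n s)
      (g t • dΨ n t + (a * g t) • Ψ n t) t := hgd.smul (hderiv n t)
  refine ⟨g t • dΨ n t + (a * g t) • Ψ n t, ?_, ?_⟩
  · have : (fun s : ℝ => Complex.exp (Complex.I * ((ε * θ₁ * s / 2 - α * n : ℝ) : ℂ)) • Ψ n s)
        = fun s : ℝ => g s • Ψ n s := funext fun s => by rw [hg]
    rw [this]; exact hD
  · have e1 : Complex.exp (Complex.I * ((ε : ℂ) * θ₁ * t / 2 - α * ((n : ℂ) + 1)))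
        = g t * Complex.exp (-(Complex.I * α)) := by
      rw [hgdef, ← Complex.exp_add]; congr 1; ring
    have e2 : Complex.exp (Complex.I * ((ε : ℂ) * θ₁ * t / 2 - α * ((n : ℂ) - 1)))
        = g t * Complex.exp (Complex.I * α) := by
      rw [hgdef, ← Complex.exp_add]; congr 1; ring
    have e3 : Complex.exp (Complex.I * ((ε : ℂ) * θ₁ * t / 2 - α * (n : ℂ))) = g t := by
      rw [hgdef]; congr 1; ring
    have hev := hevol n t
    funext i
    have hevi := congrFun hev i
    simp only [Pi.smul_apply, Pi.add_apply, smul_eq_mul] at hevi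
    simp only [Pi.smul_apply, Pi.add_apply, Pi.sub_apply, smul_eq_mul, e1, e2, e3]
    have hI : Complex.I * Complex.I = -1 := Complex.I_mul_I
    linear_combination g t * hevi + (Ψ n t i * (ε * θ₁ / 2) * g t) * hI
end
end

section
/- If a 2×2 unitary U(k) = e^{iδ} R_z(ψ₀ - 2k) R_y(θ₀) R_z(φ₀) satisfies U(k)ⁿ = I for all k ∈ ℝ (with n ≥ 1 and ψ₀, θ₀, φ₀, δ real constants independent of k), then cos(θ₀/2) = 0, i.e., θ₀ = pπ for some odd integer p. In particular for n = 1 no choice of constants makes U(k) = I for all k. -/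
open Matrix Complex MeasureTheory

noncomputable section

open Polynomial

lemma lowpow (c d : ℂ) : ∀ m : ℕ,
    (!![0,0;c,d] : Matrix (Fin 2) (Fin 2) ℂ) ^ (m+1) = !![0, 0; d^m*c, d^(m+1)] := by
  intro m
  induction m with
  | zero => simp [pow_one]
  | succ m ih =>
    rw [pow_succ, ih, Matrix.mul_fin_two]
    ring_nf

theorem stmt18 (ψ₀ θ₀ φ₀ δ : ℝ) (n : ℕ) (hn : 1 ≤ n)
    (U : ℝ → Matrix (Fin 2) (Fin 2) ℂ)
    (hU : ∀ k : ℝ, U k =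
      Complex.exp (Complex.I * δ) • (Rz (ψ₀ - 2 * k) * Ry θ₀ * Rz φ₀))
    (hroot : ∀ k : ℝ, (U k) ^ n = 1) :
    Real.cos (θ₀ / 2) = 0 ∧ (∃ p : ℤ, Odd p ∧ θ₀ = p * Real.pi) ∧ n ≠ 1 := by
  set A : Matrix (Fin 2) (Fin 2) ℂ :=
    Complex.exp (Complex.I * δ) • (Rz ψ₀ * Ry θ₀ * Rz φ₀) with hA
  set a := A 0 0; set b := A 0 1; set c := A 1 0; set d := A 1 1 with hd
  have hAmat : A = !![a, b; c, d] := by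
    ext i j; fin_cases i <;> fin_cases j <;> rfl
  set M : Matrix (Fin 2) (Fin 2) ℂ[X] :=
    !![X * Polynomial.C a, X * Polynomial.C b; Polynomial.C c, Polynomial.C d] with hM
  -- evaluation at e^{2ik}
  have hev : ∀ k : ℝ, (Polynomial.evalRingHom (Complex.exp (2 * Complex.I * k))).mapMatrix M
      = Complex.exp (Complex.I * k) • U k := by
    intro k
    have h1 : (Polynomial.evalRingHom (Complex.exp (2 * Complex.I * k))).mapMatrix M
        = !![Complex.exp (2*Complex.I*k), 0; 0, 1] * A := by
      rw [hAmat, Matrix.mul_fin_two]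
      ext i j; fin_cases i <;> fin_cases j <;>
        simp [hM, RingHom.mapMatrix_apply, Matrix.map_apply] <;> ring
    rw [h1, hU k, hA]
    have h2 : Complex.exp (Complex.I * k) • Rz (ψ₀ - 2*k)
        = !![Complex.exp (2*Complex.I*k), 0; 0, 1] * Rz ψ₀ := by
      unfold Rz
      rw [Matrix.mul_fin_two]
      ext i j; fin_cases i <;> fin_cases j <;>
        simp [← Complex.exp_add] <;> [skip; skip] <;> (congr 1; push_cast; ring)
    calc !![Complex.exp (2*Complex.I*k), 0; 0, 1] *
          (Complex.exp (Complex.I * δ) • (Rz ψ₀ * Ry θ₀ * Rz φ₀))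
        = Complex.exp (Complex.I * δ) •
          ((!![Complex.exp (2*Complex.I*k), 0; 0, 1] * Rz ψ₀) * Ry θ₀ * Rz φ₀) := by
          rw [Matrix.mul_smul]; congr 1; simp only [Matrix.mul_assoc]
      _ = Complex.exp (Complex.I * δ) •
          ((Complex.exp (Complex.I * k) • Rz (ψ₀ - 2*k)) * Ry θ₀ * Rz φ₀) := by rw [h2]
      _ = Complex.exp (Complex.I * k) •
          (Complex.exp (Complex.I * δ) • (Rz (ψ₀ - 2*k) * Ry θ₀ * Rz φ₀)) := by
          rw [Matrix.smul_mul, Matrix.smul_mul, smul_comm]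
  -- the polynomial identity
  set p : ℂ[X] := (M ^ n) 0 0 - (M ^ n) 1 1 with hp
  have hp0 : p = 0 := by
    apply Polynomial.eq_zero_of_infinite_isRoot
    have hsub : (fun k : ℝ => Complex.exp (2 * Complex.I * k)) '' (Set.Ioo 0 1)
        ⊆ {x | p.IsRoot x} := by
      rintro _ ⟨k, -, rfl⟩
      have hpow : (Polynomial.evalRingHom (Complex.exp (2 * Complex.I * k))).mapMatrix (M ^ n)
          = (Complex.exp (Complex.I * k)) ^ n • (U k) ^ n := by
        rw [map_pow, hev k, _root_.smul_pow]
      rw [hroot k] at hpow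
      have h00 := congrFun (congrFun (congrArg (fun m => m) hpow) 0) 0
      have h11 := congrFun (congrFun (congrArg (fun m => m) hpow) 1) 1
      simp only [RingHom.mapMatrix_apply, Matrix.map_apply, Matrix.smul_apply,
        Matrix.one_apply_eq, smul_eq_mul, mul_one] at h00 h11
      show p.IsRoot _
      rw [Polynomial.IsRoot.def, hp, Polynomial.eval_sub,
        show ((M^n) 0 0).eval _ = _ from h00, show ((M^n) 1 1).eval _ = _ from h11, sub_self]
    refine Set.Infinite.mono hsub (Set.Infinite.image ?_ (Set.Ioo_infinite (by norm_num)))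
    intro x hx y hy hxy
    rw [Complex.exp_eq_exp_iff_exists_int] at hxy
    obtain ⟨m, hm⟩ := hxy
    have hc : (x:ℂ) = y + m * Real.pi := by
      have hI : (2:ℂ) * Complex.I ≠ 0 := by simp [Complex.I_ne_zero]
      have h2 : 2 * Complex.I * x = 2 * Complex.I * ((y:ℂ) + m * Real.pi) := by rw [hm]; ring
      exact mul_left_cancel₀ hI h2
    have hx' : x = y + m * Real.pi := by exact_mod_cast hc
    obtain ⟨hx1, hx2⟩ := hx; obtain ⟨hy1, hy2⟩ := hy
    have hm0 : m = 0 := by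
      by_contra h
      rcases lt_or_gt_of_ne h with hlt | hgt
      · have hle : (m:ℝ) ≤ -1 := by exact_mod_cast (by omega : m ≤ -1)
        nlinarith [Real.pi_gt_three]
      · have hge : (1:ℝ) ≤ m := by exact_mod_cast hgt
        nlinarith [Real.pi_gt_three]
    rw [hm0] at hx'
    simpa using hx'
  -- evaluate at 0
  have hev0 : (Polynomial.evalRingHom (0:ℂ)).mapMatrix (M ^ n)
      = (!![0,0;c,d] : Matrix (Fin 2) (Fin 2) ℂ) ^ n := by
    rw [map_pow]
    congr 1
    ext i j; fin_cases i <;> fin_cases j <;>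
      simp [hM, RingHom.mapMatrix_apply, Matrix.map_apply]
  have hdn : d ^ n = 0 := by
    obtain ⟨m, rfl⟩ : ∃ m, n = m + 1 := ⟨n - 1, by omega⟩
    rw [lowpow] at hev0
    have heq := congrArg (Polynomial.eval (0:ℂ)) hp0
    rw [hp, Polynomial.eval_sub, Polynomial.eval_zero] at heq
    have h00 := congrFun (congrFun hev0 0) 0
    have h11 := congrFun (congrFun hev0 1) 1
    simp only [RingHom.mapMatrix_apply, Matrix.map_apply, Polynomial.coe_evalRingHom] at h00 h11
    rw [h00, h11] at heq
    simpa using heq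
  have hdz : d = 0 := pow_eq_zero_iff (by omega) |>.mp hdn
  -- compute d
  have hdval : d = Complex.exp (Complex.I * δ) * (Complex.exp (Complex.I * ψ₀ / 2) *
      (Real.cos (θ₀ / 2) : ℂ) * Complex.exp (Complex.I * φ₀ / 2)) := by
    rw [hd, hA]
    simp [Rz, Ry, Matrix.mul_fin_two, Matrix.smul_apply]
  have hcos : Real.cos (θ₀ / 2) = 0 := by
    rw [hdval] at hdz
    have h1 := Complex.exp_ne_zero (Complex.I * δ)
    have h2 := Complex.exp_ne_zero (Complex.I * ψ₀ / 2)
    have h3 := Complex.exp_ne_zero (Complex.I * φ₀ / 2)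
    have : ((Real.cos (θ₀/2) : ℂ)) = 0 := by
      simp only [mul_eq_zero, h1, h2, h3, false_or, or_false] at hdz
      exact hdz
    exact_mod_cast this
  refine ⟨hcos, ?_, ?_⟩
  · obtain ⟨m, hm⟩ := Real.cos_eq_zero_iff.mp hcos
    exact ⟨2*m+1, ⟨m, by ring⟩, by push_cast; linarith [hm]⟩
  · rintro rfl
    have hU0 : U 0 = A := by rw [hU 0, hA]; norm_num
    have hone : U 0 = 1 := by have := hroot 0; rwa [pow_one] at this
    have hd1 : d = 1 := by rw [hd, ← hU0, hone]; exact Matrix.one_apply_eq 1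
    rw [hdz] at hd1; exact zero_ne_one hd1
end
end
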